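/- Let A be a positive bounded operator on a Hilbert space H and S a closed subspace. The shorted operator [S]A, defined as the maximum in the Löwner order of {X ∈ L(H)^+ : X ≤ A and R(X) ⊆ S}, exists and equals A^{1/2} P_M A^{1/2}, where M = (A^{1/2})^{-1}(S) and P_M is the orthogonal projection onto M. -/

import Mathlib

/-!
Write `A = T†T` (here `T = A^{1/2}`) and let `P` project onto `M = (T†)⁻¹(S)`. The candidate
`T†PT` is positive, satisfies `A - T†PT = T†(1 - P)T ≥ 0`, and has range in `S` because `P`
maps into `M`. For maximality, let `0 ≤ X ≤ A` with `R(X) ⊆ S`. Then `X` vanishes on `Sᗮ`,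
so `⟪X x, x⟫ = ⟪X (x + y), x + y⟫ ≤ ‖T x + T y‖²` for every `y ∈ Sᗮ`. As `S` is closed,
the closure of `T(Sᗮ)` is `Mᗮ`, which contains `P T x - T x`; hence
`⟪X x, x⟫ ≤ ‖P T x‖² = ⟪T†PT x, x⟫`.
-/

open ContinuousLinearMap

/-- `P` is the orthogonal projection onto the closed subspace `S`: a selfadjoint
idempotent with range `S`. -/
def IsOrthoProj {E : Type*} [NormedAddCommGroup E] [InnerProductSpace ℂ E] [CompleteSpace E]
    (P : E →L[ℂ] E) (S : Submodule ℂ E) : Prop :=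
  IsIdempotentElem P ∧ IsSelfAdjoint P ∧ LinearMap.range (P : E →ₗ[ℂ] E) = S

variable {H : Type*} [NormedAddCommGroup H] [InnerProductSpace ℂ H] [CompleteSpace H]

open RCLike
open scoped InnerProduct

/-- `B` is the shorted operator `[S]A`: the Löwner-maximum of `{X ≥ 0 : X ≤ A, R(X) ⊆ S}`. -/
def IsShortedOperator {𝕜 E : Type*} [RCLike 𝕜] [NormedAddCommGroup E] [InnerProductSpace 𝕜 E]
    (A : E →L[𝕜] E) (S : Submodule 𝕜 E) (B : E →L[𝕜] E) : Prop :=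
  B.IsPositive ∧ (A - B).IsPositive ∧ (B : E →ₗ[𝕜] E).range ≤ S ∧
    ∀ X : E →L[𝕜] E, X.IsPositive → (A - X).IsPositive → (X : E →ₗ[𝕜] E).range ≤ S →
      (B - X).IsPositive

section Orthogonal

variable {𝕜 E F : Type*} [RCLike 𝕜] [NormedAddCommGroup E] [InnerProductSpace 𝕜 E]
  [CompleteSpace E] [NormedAddCommGroup F] [InnerProductSpace 𝕜 F] [CompleteSpace F]

theorem Submodule.orthogonal_map_eq_comap_adjoint (T : E →L[𝕜] F) (K : Submodule 𝕜 E) :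
    (K.map (T : E →ₗ[𝕜] F))ᗮ = Kᗮ.comap (T† : F →ₗ[𝕜] E) := by
  ext z
  simp [Submodule.mem_orthogonal, ← adjoint_inner_right]

theorem Submodule.topologicalClosure_map_orthogonal (T : E →L[𝕜] F) (S : Submodule 𝕜 E)
    [S.HasOrthogonalProjection] :
    (Sᗮ.map (T : E →ₗ[𝕜] F)).topologicalClosure = (S.comap (T† : F →ₗ[𝕜] E))ᗮ := by
  rw [← Submodule.orthogonal_orthogonal_eq_closure, orthogonal_map_eq_comap_adjoint,
    S.orthogonal_orthogonal]

theorem ContinuousLinearMap.apply_eq_zero_of_range_le {X : E →L[𝕜] E} (hX : IsSelfAdjoint X)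
    {S : Submodule 𝕜 E} (hXS : (X : E →ₗ[𝕜] E).range ≤ S) {y : E} (hy : y ∈ Sᗮ) : X y = 0 := by
  have := Submodule.orthogonal_le hXS hy
  rwa [X.orthogonal_range, hX.adjoint_eq] at this

theorem ContinuousLinearMap.inner_apply_add_orthogonal {X : E →L[𝕜] E} (hX : IsSelfAdjoint X)
    {S : Submodule 𝕜 E} (hXS : (X : E →ₗ[𝕜] E).range ≤ S) (x : E) {y : E} (hy : y ∈ Sᗮ) :
    inner 𝕜 (X (x + y)) (x + y) = inner 𝕜 (X x) x := by
  have hxy : inner 𝕜 (X x) y = 0 := Submodule.inner_right_of_mem_orthogonal (hXS ⟨x, rfl⟩) hy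
  rw [map_add, X.apply_eq_zero_of_range_le hX hXS hy, add_zero, inner_add_right, hxy, add_zero]

end Orthogonal

section OrthoProj

variable {E F : Type*} [NormedAddCommGroup E] [InnerProductSpace ℂ E] [CompleteSpace E]
  [NormedAddCommGroup F] [InnerProductSpace ℂ F] [CompleteSpace F] {P : E →L[ℂ] E}
  {K : Submodule ℂ E}

theorem IsOrthoProj.isStarProjection (hP : IsOrthoProj P K) : IsStarProjection P :=
  ⟨hP.1, hP.2.1⟩

theorem IsOrthoProj.apply_mem (hP : IsOrthoProj P K) (x : E) : P x ∈ K :=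
  hP.2.2 ▸ LinearMap.mem_range_self _ x

theorem IsOrthoProj.sub_apply_mem_orthogonal (hP : IsOrthoProj P K) (x : E) :
    x - P x ∈ Kᗮ := by
  rw [← hP.2.2]
  rintro _ ⟨u, rfl⟩
  rw [coe_coe, inner_sub_right, ← adjoint_inner_left, hP.2.1.adjoint_eq,
    ← comp_apply, ← mul_def, hP.1.eq, sub_self]

theorem IsOrthoProj.re_inner_apply_self (hP : IsOrthoProj P K) (x : E) :
    re (inner ℂ (P x) x) = ‖P x‖ ^ 2 := by
  rw [apply_norm_sq_eq_inner_adjoint_left, hP.2.1.adjoint_eq, ← mul_def, hP.1.eq]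

theorem IsOrthoProj.isPositive_adjoint_conj (hP : IsOrthoProj P K) (T : F →L[ℂ] E) :
    (T† ∘L P ∘L T).IsPositive :=
  (IsPositive.of_isStarProjection hP.isStarProjection).adjoint_conj T

theorem IsOrthoProj.isPositive_sub_adjoint_conj (hP : IsOrthoProj P K) (T : F →L[ℂ] E) :
    (T† ∘L T - T† ∘L P ∘L T).IsPositive := by
  have := (IsPositive.of_isStarProjection hP.isStarProjection.one_sub).adjoint_conj T
  rwa [sub_comp, comp_sub, one_def, id_comp] at this

end OrthoProj

section Shorted

variable {F : Type*} [NormedAddCommGroup F] [InnerProductSpace ℂ F] [CompleteSpace F]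
  {T : H →L[ℂ] F} {S : Submodule ℂ H} {P : F →L[ℂ] F}

theorem IsOrthoProj.re_inner_le_re_inner_adjoint_conj (hS : IsClosed (S : Set H))
    (hP : IsOrthoProj P (S.comap (T† : F →ₗ[ℂ] H))) {X : H →L[ℂ] H} (hX : IsSelfAdjoint X)
    (hXT : (T† ∘L T - X).IsPositive) (hXS : (X : H →ₗ[ℂ] H).range ≤ S) (x : H) :
    re (inner ℂ (X x) x) ≤ re (inner ℂ ((T† ∘L P ∘L T) x) x) := by
  have : CompleteSpace S := hS.completeSpace_coe
  set r := re (inner ℂ (X x) x)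
  have hbound : ∀ y ∈ Sᗮ, r ≤ ‖T x + T y‖ ^ 2 := by
    intro y hy
    have := hXT.re_inner_nonneg_left (x + y)
    rw [sub_apply, inner_sub_left, map_sub, X.inner_apply_add_orthogonal hX hXS x hy,
      comp_apply, adjoint_inner_left, inner_self_eq_norm_sq, map_add] at this
    linarith
  have hclosed : IsClosed {z : F | r ≤ ‖T x + z‖ ^ 2} :=
    isClosed_le continuous_const (by fun_prop)
  have hsub : (Sᗮ.map (T : H →ₗ[ℂ] F)).topologicalClosure ≤ {z : F | r ≤ ‖T x + z‖ ^ 2} := by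
    rw [Submodule.topologicalClosure_coe, hclosed.closure_subset_iff]
    rintro _ ⟨y, hy, rfl⟩
    exact hbound y hy
  have hmem : P (T x) - T x ∈ (Sᗮ.map (T : H →ₗ[ℂ] F)).topologicalClosure := by
    rw [Submodule.topologicalClosure_map_orthogonal, ← neg_sub]
    exact neg_mem (hP.sub_apply_mem_orthogonal (T x))
  have hPT : r ≤ ‖T x + (P (T x) - T x)‖ ^ 2 := hsub hmem
  rwa [add_sub_cancel, ← hP.re_inner_apply_self, ← adjoint_inner_left, ← comp_apply,
    ← comp_apply] at hPT

theorem IsOrthoProj.isShortedOperator_adjoint_conj (hS : IsClosed (S : Set H))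
    (hP : IsOrthoProj P (S.comap (T† : F →ₗ[ℂ] H))) :
    IsShortedOperator (T† ∘L T) S (T† ∘L P ∘L T) := by
  refine ⟨hP.isPositive_adjoint_conj T, hP.isPositive_sub_adjoint_conj T,
    fun _ ⟨x, hx⟩ => hx ▸ hP.apply_mem (T x), fun X hX hXT hXS => ⟨?_, fun x => ?_⟩⟩
  · exact ((hP.isPositive_adjoint_conj T).isSelfAdjoint.sub hX.isSelfAdjoint).isSymmetric
  · rw [reApplyInnerSelf, sub_apply, inner_sub_left, map_sub, sub_nonneg]
    exact hP.re_inner_le_re_inner_adjoint_conj hS hX.isSelfAdjoint hXT hXS x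

end Shorted

theorem krein_shorted_exists (A sA : H →L[ℂ] H)
    (hsA : sA.IsPositive) (hsA2 : sA ∘L sA = A)
    (S : Submodule ℂ H) (hS : IsClosed (S : Set H))
    (PM : H →L[ℂ] H) (hPM : IsOrthoProj PM (Submodule.comap (sA : H →ₗ[ℂ] H) S)) :
    (sA ∘L PM ∘L sA).IsPositive ∧ (A - sA ∘L PM ∘L sA).IsPositive ∧
      LinearMap.range ((sA ∘L PM ∘L sA : H →L[ℂ] H) : H →ₗ[ℂ] H) ≤ S ∧
      ∀ X : H →L[ℂ] H, X.IsPositive → (A - X).IsPositive → LinearMap.range (X : H →ₗ[ℂ] H) ≤ S →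
        ((sA ∘L PM ∘L sA) - X).IsPositive := by
  have hadj : sA† = sA := hsA.isSelfAdjoint.adjoint_eq
  rw [← hadj] at hPM
  simpa only [IsShortedOperator, hadj, hsA2] using hPM.isShortedOperator_adjoint_conj hS
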